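/- arXiv:2508.04690 — 3 statements merged into one kernel-verified Lean document; each statement's English description precedes it below -/
import Mathlib

section
/- Let u : ℝ² → ℝ be a smooth function of the variables (τ, ρ) and let L denote the reduced conformal wave operator. Then for every natural number p and every (τ, ρ) ∈ ℝ², the commutator identity ∂_ρ^p(Lu) − L(∂_ρ^p u) = 2τ p ∂_τ ∂_ρ^p u − 2 p ρ ∂_ρ^{p+1} u − p(p−1) ∂_ρ^p u holds. -/
/-- Partial derivative in the first variable (`τ`). -/
noncomputable def pdT (u : ℝ → ℝ → ℝ) : ℝ → ℝ → ℝ :=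
  fun τ ρ => deriv (fun s => u s ρ) τ

/-- Partial derivative in the second variable (`ρ`). -/
noncomputable def pdR (u : ℝ → ℝ → ℝ) : ℝ → ℝ → ℝ :=
  fun τ ρ => deriv (fun s => u τ s) ρ

/-- The reduced conformal wave operator
`(Lu)(τ,ρ) = (1−τ²)∂_τ²u + 2τρ ∂_τ∂_ρ u − ρ² ∂_ρ² u − 2τ ∂_τ u`. -/
noncomputable def Lop (u : ℝ → ℝ → ℝ) : ℝ → ℝ → ℝ :=
  fun τ ρ => (1 - τ ^ 2) * pdT (pdT u) τ ρ + 2 * τ * ρ * pdT (pdR u) τ ρ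
    - ρ ^ 2 * pdR (pdR u) τ ρ - 2 * τ * pdT u τ ρ

/-!
Differentiating the coefficients of `L` in `ρ` gives `[∂_ρ, L] = 2τ ∂_τ∂_ρ − 2ρ ∂_ρ²`, once the
mixed partials are known to commute. Writing `∂_ρ^p (L u) = L w + C_p w` with `w = ∂_ρ^p u` and
`C_p = 2pτ ∂_τ − 2pρ ∂_ρ − p(p−1)` (`commutatorLop p`), one more `ρ`-derivative gives
`L w' + C_1 w' + C_p w' − 2p w'` with `w' = ∂_ρ w`, and `C_1 + C_p − 2p = C_{p+1}`.
-/

open Function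
open scoped ContDiff

noncomputable def commutatorLop (p : ℕ) (w : ℝ → ℝ → ℝ) : ℝ → ℝ → ℝ :=
  fun τ ρ => 2 * τ * p * pdT w τ ρ - 2 * p * ρ * pdR w τ ρ - p * (p - 1) * w τ ρ

variable {u : ℝ → ℝ → ℝ}

section Differentiable

variable (hu : Differentiable ℝ (uncurry u)) (τ ρ : ℝ)
include hu

theorem hasDerivAt_fst_slice : HasDerivAt (fun s => u s ρ) (fderiv ℝ (uncurry u) (τ, ρ) (1, 0)) τ :=
  (hu (τ, ρ)).hasFDerivAt.comp_hasDerivAt (f := fun s => (s, ρ)) τ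
    ((hasDerivAt_id τ).prodMk (hasDerivAt_const τ ρ))

theorem hasDerivAt_snd_slice : HasDerivAt (fun s => u τ s) (fderiv ℝ (uncurry u) (τ, ρ) (0, 1)) ρ :=
  (hu (τ, ρ)).hasFDerivAt.comp_hasDerivAt (f := fun s => (τ, s)) ρ
    ((hasDerivAt_const ρ τ).prodMk (hasDerivAt_id ρ))

theorem pdT_eq_fderiv : pdT u τ ρ = fderiv ℝ (uncurry u) (τ, ρ) (1, 0) :=
  (hasDerivAt_fst_slice hu τ ρ).deriv

theorem pdR_eq_fderiv : pdR u τ ρ = fderiv ℝ (uncurry u) (τ, ρ) (0, 1) :=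
  (hasDerivAt_snd_slice hu τ ρ).deriv

theorem hasDerivAt_pdR : HasDerivAt (fun s => u τ s) (pdR u τ ρ) ρ :=
  pdR_eq_fderiv hu τ ρ ▸ hasDerivAt_snd_slice hu τ ρ

end Differentiable

theorem uncurry_pdT (hu : Differentiable ℝ (uncurry u)) :
    uncurry (pdT u) = fun q => fderiv ℝ (uncurry u) q (1, 0) :=
  funext fun q => pdT_eq_fderiv hu q.1 q.2

theorem uncurry_pdR (hu : Differentiable ℝ (uncurry u)) :
    uncurry (pdR u) = fun q => fderiv ℝ (uncurry u) q (0, 1) :=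
  funext fun q => pdR_eq_fderiv hu q.1 q.2

theorem ContDiff.uncurry_pdT (hu : ContDiff ℝ ∞ (uncurry u)) : ContDiff ℝ ∞ (uncurry (pdT u)) := by
  rw [_root_.uncurry_pdT (hu.differentiable (by simp))]
  exact (hu.fderiv_right (by simp)).clm_apply contDiff_const

theorem ContDiff.uncurry_pdR (hu : ContDiff ℝ ∞ (uncurry u)) : ContDiff ℝ ∞ (uncurry (pdR u)) := by
  rw [_root_.uncurry_pdR (hu.differentiable (by simp))]
  exact (hu.fderiv_right (by simp)).clm_apply contDiff_const

theorem ContDiff.uncurry_iterate_pdR (hu : ContDiff ℝ ∞ (uncurry u)) (p : ℕ) :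
    ContDiff ℝ ∞ (uncurry (pdR^[p] u)) := by
  induction p with
  | zero => exact hu
  | succ p ih => rw [iterate_succ_apply']; exact ih.uncurry_pdR

/-- Both mixed partials are values of the second Fréchet derivative on `(1, 0)` and `(0, 1)`,
which is symmetric (Schwarz). -/
theorem pdT_pdR (hu : ContDiff ℝ 2 (uncurry u)) : pdT (pdR u) = pdR (pdT u) := by
  funext τ ρ
  set F := uncurry u
  have hF : Differentiable ℝ F := hu.differentiable (by simp)
  have hF' : Differentiable ℝ (fderiv ℝ F) :=
    (hu.fderiv_right (m := 1) (by norm_num)).differentiable (by simp)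
  have hdir (v w : ℝ × ℝ) :
      fderiv ℝ (fun q => fderiv ℝ F q w) (τ, ρ) v = fderiv ℝ (fderiv ℝ F) (τ, ρ) v w := by
    rw [fderiv_clm_apply (hF' _) (differentiableAt_const w)]
    simp
  have hsymm := (hu.contDiffAt (x := (τ, ρ))).isSymmSndFDerivAt (by simp)
  have hR : Differentiable ℝ (uncurry (pdR u)) := by
    rw [uncurry_pdR hF]; exact fun q => (hF' q).clm_apply (differentiableAt_const _)
  have hT : Differentiable ℝ (uncurry (pdT u)) := by
    rw [uncurry_pdT hF]; exact fun q => (hF' q).clm_apply (differentiableAt_const _)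
  rw [pdT_eq_fderiv hR, pdR_eq_fderiv hT, uncurry_pdR hF, uncurry_pdT hF, hdir, hdir, hsymm]

section Smooth

variable (hu : ContDiff ℝ ∞ (uncurry u))
include hu

theorem pdR_pdT_pdT : pdR (pdT (pdT u)) = pdT (pdT (pdR u)) := by
  rw [pdT_pdR (hu.of_le ENat.LEInfty.out),
    pdT_pdR (hu.uncurry_pdT.of_le ENat.LEInfty.out)]

theorem hasDerivAt_Lop (τ ρ : ℝ) :
    HasDerivAt (fun s => Lop u τ s)
      (Lop (pdR u) τ ρ + 2 * τ * pdT (pdR u) τ ρ - 2 * ρ * pdR (pdR u) τ ρ) ρ := by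
  have hTT := hasDerivAt_pdR (hu.uncurry_pdT.uncurry_pdT.differentiable (by simp)) τ ρ
  have hTR := hasDerivAt_pdR (hu.uncurry_pdR.uncurry_pdT.differentiable (by simp)) τ ρ
  have hRR := hasDerivAt_pdR (hu.uncurry_pdR.uncurry_pdR.differentiable (by simp)) τ ρ
  have hT := hasDerivAt_pdR (hu.uncurry_pdT.differentiable (by simp)) τ ρ
  refine ((((hTT.const_mul (1 - τ ^ 2)).add
    (((hasDerivAt_id ρ).const_mul (2 * τ)).mul hTR)).sub
    ((hasDerivAt_pow 2 ρ).mul hRR)).sub (hT.const_mul (2 * τ))).congr_deriv ?_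
  rw [pdR_pdT_pdT hu, ← pdT_pdR (hu.uncurry_pdR.of_le ENat.LEInfty.out),
    ← pdT_pdR (hu.of_le ENat.LEInfty.out)]
  simp only [Lop, id]
  ring

theorem hasDerivAt_commutatorLop (p : ℕ) (τ ρ : ℝ) :
    HasDerivAt (fun s => commutatorLop p u τ s)
      (commutatorLop p (pdR u) τ ρ - 2 * p * pdR u τ ρ) ρ := by
  have hT := hasDerivAt_pdR (hu.uncurry_pdT.differentiable (by simp)) τ ρ
  have hR := hasDerivAt_pdR (hu.uncurry_pdR.differentiable (by simp)) τ ρ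
  have h := hasDerivAt_pdR (hu.differentiable (by simp)) τ ρ
  refine (((hT.const_mul (2 * τ * p)).sub
    (((hasDerivAt_id ρ).const_mul (2 * (p : ℝ))).mul hR)).sub
    (h.const_mul ((p : ℝ) * (p - 1)))).congr_deriv ?_
  rw [← pdT_pdR (hu.of_le ENat.LEInfty.out)]
  simp only [commutatorLop, id]
  ring

end Smooth

theorem iterate_pdR_Lop (hu : ContDiff ℝ ∞ (uncurry u)) (p : ℕ) :
    pdR^[p] (Lop u) = Lop (pdR^[p] u) + commutatorLop p (pdR^[p] u) := by
  induction p with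
  | zero => funext τ ρ; simp [commutatorLop]
  | succ p ih =>
    have hw := hu.uncurry_iterate_pdR p
    funext τ ρ
    rw [iterate_succ_apply', ih, iterate_succ_apply']
    refine ((hasDerivAt_Lop hw τ ρ).add (hasDerivAt_commutatorLop hw p τ ρ)).deriv.trans ?_
    simp only [Pi.add_apply, commutatorLop]
    push_cast
    ring

/-- Commutator of `∂_ρ^p` with the reduced conformal wave operator:
`∂_ρ^p(Lu) − L(∂_ρ^p u) = 2τp ∂_τ∂_ρ^p u − 2pρ ∂_ρ^{p+1} u − p(p−1) ∂_ρ^p u`. -/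
theorem stmt0 (u : ℝ → ℝ → ℝ) (hu : ContDiff ℝ (⊤ : ℕ∞) (Function.uncurry u))
    (p : ℕ) (τ ρ : ℝ) :
    (pdR^[p] (Lop u)) τ ρ - Lop (pdR^[p] u) τ ρ
      = 2 * τ * (p : ℝ) * pdT (pdR^[p] u) τ ρ
        - 2 * (p : ℝ) * ρ * (pdR^[p + 1] u) τ ρ
        - (p : ℝ) * ((p : ℝ) - 1) * (pdR^[p] u) τ ρ := by
  rw [iterate_pdR_Lop hu, iterate_succ_apply', Pi.add_apply, Pi.add_apply, add_sub_cancel_left]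
  rfl
end

section
/- Let p ≥ 0 be an integer. A twice differentiable function a : (−1,1) → ℝ satisfies (1−τ²) a''(τ) + 2(p−1)τ a'(τ) + 2p a(τ) = 0 on (−1,1) if and only if there exist real constants c and d such that a(τ) = ((1−τ)/2)^p ((1+τ)/2)^p · ( c + d ∫₀^τ (1−s²)^{−(p+1)} ds ) for all τ ∈ (−1,1). -/
/-!
The operator is exact: `(1 - τ²) a'' + 2(p - 1) τ a' + 2p a` is the derivative of the flux
`(1 - τ²) a' + 2p τ a`, so the equation says that the flux is a constant `d`. Dividing by
`(1 - τ²)ᵖ` turns `flux = d` into `(a / (1 - τ²)ᵖ)' = d (1 - τ²)^{-(p+1)}`, which integrates to the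
stated family; the factor `4ᵖ` in `((1 - τ)/2)ᵖ ((1 + τ)/2)ᵖ = (1 - τ²)ᵖ / 4ᵖ` is absorbed into `c, d`.
-/

open Set

noncomputable def jacobiFlux (k : ℝ) (a : ℝ → ℝ) (τ : ℝ) : ℝ :=
  (1 - τ ^ 2) * deriv a τ + 2 * k * τ * a τ

lemma one_sub_sq_pos {τ : ℝ} (hτ : τ ∈ Ioo (-1 : ℝ) 1) : 0 < 1 - τ ^ 2 := by
  nlinarith [hτ.1, hτ.2]

lemma hasDerivAt_one_sub_sq (τ : ℝ) : HasDerivAt (fun t : ℝ => 1 - t ^ 2) (-2 * τ) τ := by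
  simpa [mul_comm] using (hasDerivAt_pow 2 τ).const_sub 1

lemma hasDerivAt_one_sub_sq_pow (p : ℕ) {τ : ℝ} (hu : 1 - τ ^ 2 ≠ 0) :
    HasDerivAt (fun t : ℝ => (1 - t ^ 2) ^ p) (-2 * p * τ * (1 - τ ^ 2) ^ p / (1 - τ ^ 2)) τ := by
  refine ((hasDerivAt_one_sub_sq τ).pow p).congr_deriv ?_
  rcases p with _ | p
  · simp
  · field_simp
    rw [Nat.add_sub_cancel, pow_succ]
    ring

lemma hasDerivAt_integral_inv_one_sub_sq_pow (n : ℕ) {τ : ℝ} (hτ : τ ∈ Ioo (-1 : ℝ) 1) :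
    HasDerivAt (fun t => ∫ s in (0 : ℝ)..t, ((1 - s ^ 2) ^ n)⁻¹) ((1 - τ ^ 2) ^ n)⁻¹ τ := by
  have hcont : ContinuousOn (fun s : ℝ => ((1 - s ^ 2) ^ n)⁻¹) (Ioo (-1 : ℝ) 1) :=
    fun s hs => (by fun_prop : Continuous fun s : ℝ => (1 - s ^ 2) ^ n).continuousWithinAt.inv₀
      (pow_pos (one_sub_sq_pos hs) n).ne'
  have hsub : uIcc 0 τ ⊆ Ioo (-1 : ℝ) 1 := ordConnected_Ioo.uIcc_subset (by norm_num) hτ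
  exact intervalIntegral.integral_hasDerivAt_right (hcont.mono hsub).intervalIntegrable
    (hcont.stronglyMeasurableAtFilter isOpen_Ioo τ hτ) (hcont.continuousAt (isOpen_Ioo.mem_nhds hτ))

lemma hasDerivAt_jacobiFlux (k : ℝ) {a : ℝ → ℝ} {τ : ℝ} (ha : DifferentiableAt ℝ a τ)
    (ha' : DifferentiableAt ℝ (deriv a) τ) :
    HasDerivAt (jacobiFlux k a)
      ((1 - τ ^ 2) * deriv (deriv a) τ + 2 * (k - 1) * τ * deriv a τ + 2 * k * a τ) τ := by
  have h := ((hasDerivAt_one_sub_sq τ).fun_mul ha'.hasDerivAt).add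
    (((hasDerivAt_id' τ).const_mul (2 * k)).fun_mul ha.hasDerivAt)
  exact h.congr_deriv (by ring)

lemma ode_iff_exists_jacobiFlux_eq (k : ℝ) {a : ℝ → ℝ}
    (ha : ∀ τ ∈ Ioo (-1 : ℝ) 1, DifferentiableAt ℝ a τ)
    (ha' : ∀ τ ∈ Ioo (-1 : ℝ) 1, DifferentiableAt ℝ (deriv a) τ) :
    (∀ τ ∈ Ioo (-1 : ℝ) 1,
        (1 - τ ^ 2) * deriv (deriv a) τ + 2 * (k - 1) * τ * deriv a τ + 2 * k * a τ = 0)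
      ↔ ∃ d, ∀ τ ∈ Ioo (-1 : ℝ) 1, jacobiFlux k a τ = d := by
  have hflux := fun τ hτ => hasDerivAt_jacobiFlux k (ha τ hτ) (ha' τ hτ)
  constructor
  · intro hode
    refine isOpen_Ioo.exists_is_const_of_deriv_eq_zero isPreconnected_Ioo
      (fun τ hτ => (hflux τ hτ).differentiableAt.differentiableWithinAt) fun τ hτ => ?_
    rw [(hflux τ hτ).deriv, hode τ hτ, Pi.zero_apply]
  · rintro ⟨d, hd⟩ τ hτ
    have hconst : jacobiFlux k a =ᶠ[nhds τ] fun _ => d :=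
      Filter.eventuallyEq_of_mem (isOpen_Ioo.mem_nhds hτ) hd
    exact (hflux τ hτ).unique ((hasDerivAt_const τ d).congr_of_eventuallyEq hconst)

lemma exists_eq_of_jacobiFlux_eq (p : ℕ) {a : ℝ → ℝ} {d : ℝ}
    (ha : ∀ τ ∈ Ioo (-1 : ℝ) 1, DifferentiableAt ℝ a τ)
    (hd : ∀ τ ∈ Ioo (-1 : ℝ) 1, jacobiFlux p a τ = d) :
    ∃ c, ∀ τ ∈ Ioo (-1 : ℝ) 1,
      a τ = (1 - τ ^ 2) ^ p * (c + d * ∫ s in (0 : ℝ)..τ, ((1 - s ^ 2) ^ (p + 1))⁻¹) := by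
  have hderiv : ∀ τ ∈ Ioo (-1 : ℝ) 1, HasDerivAt
      (fun t => a t / (1 - t ^ 2) ^ p - d * ∫ s in (0 : ℝ)..t, ((1 - s ^ 2) ^ (p + 1))⁻¹) 0 τ := by
    intro τ hτ
    have hu := (one_sub_sq_pos hτ).ne'
    have h := ((ha τ hτ).hasDerivAt.div (hasDerivAt_one_sub_sq_pow p hu) (pow_ne_zero p hu)).sub
      ((hasDerivAt_integral_inv_one_sub_sq_pow (p + 1) hτ).const_mul d)
    refine h.congr_deriv ?_
    rw [← hd τ hτ, jacobiFlux]
    field_simp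
    ring
  obtain ⟨c, hc⟩ := isOpen_Ioo.exists_is_const_of_deriv_eq_zero isPreconnected_Ioo
    (fun τ hτ => (hderiv τ hτ).differentiableAt.differentiableWithinAt)
    (fun τ hτ => (hderiv τ hτ).deriv)
  refine ⟨c, fun τ hτ => ?_⟩
  rw [← hc τ hτ, sub_add_cancel, mul_div_cancel₀ _ (pow_pos (one_sub_sq_pos hτ) p).ne']

lemma jacobiFlux_eq_of_eq (p : ℕ) {a : ℝ → ℝ} (c d : ℝ)
    (h : ∀ τ ∈ Ioo (-1 : ℝ) 1,
      a τ = (1 - τ ^ 2) ^ p * (c + d * ∫ s in (0 : ℝ)..τ, ((1 - s ^ 2) ^ (p + 1))⁻¹)) :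
    ∀ τ ∈ Ioo (-1 : ℝ) 1, jacobiFlux p a τ = d := by
  intro τ hτ
  have hu := (one_sub_sq_pos hτ).ne'
  have hsol := (hasDerivAt_one_sub_sq_pow p hu).fun_mul
    (((hasDerivAt_integral_inv_one_sub_sq_pow (p + 1) hτ).const_mul d).const_add c)
  have hev : a =ᶠ[nhds τ] _ := Filter.eventuallyEq_of_mem (isOpen_Ioo.mem_nhds hτ) h
  rw [jacobiFlux, hev.deriv_eq, hsol.deriv, h τ hτ]
  field_simp
  ring

lemma one_sub_div_two_pow_mul_one_add_div_two_pow (p : ℕ) (τ : ℝ) :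
    ((1 - τ) / 2) ^ p * ((1 + τ) / 2) ^ p = (1 - τ ^ 2) ^ p / 4 ^ p := by
  rw [← mul_pow, ← div_pow]
  ring_nf

/-- Borderline case `ℓ = p` of the Jacobi-type ODE: a twice differentiable `a` on `(−1,1)`
satisfies `(1−τ²)a'' + 2(p−1)τ a' + 2p a = 0` if and only if
`a(τ) = ((1−τ)/2)^p ((1+τ)/2)^p (c + d ∫₀^τ (1−s²)^{−(p+1)} ds)` for some constants `c, d`. -/
theorem stmt9 (p : ℕ) (a : ℝ → ℝ)
    (ha : ∀ τ ∈ Set.Ioo (-1 : ℝ) 1, DifferentiableAt ℝ a τ)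
    (ha' : ∀ τ ∈ Set.Ioo (-1 : ℝ) 1, DifferentiableAt ℝ (deriv a) τ) :
    (∀ τ ∈ Set.Ioo (-1 : ℝ) 1,
        (1 - τ ^ 2) * deriv (deriv a) τ + 2 * ((p : ℝ) - 1) * τ * deriv a τ
          + 2 * (p : ℝ) * a τ = 0)
      ↔ ∃ c d : ℝ, ∀ τ ∈ Set.Ioo (-1 : ℝ) 1,
          a τ = ((1 - τ) / 2) ^ p * ((1 + τ) / 2) ^ p *
            (c + d * ∫ s in (0 : ℝ)..τ, ((1 - s ^ 2) ^ (p + 1))⁻¹) := by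
  have h4 : (4 : ℝ) ^ p ≠ 0 := by positivity
  simp only [one_sub_div_two_pow_mul_one_add_div_two_pow]
  rw [ode_iff_exists_jacobiFlux_eq p ha ha']
  constructor
  · rintro ⟨d, hd⟩
    obtain ⟨c, hc⟩ := exists_eq_of_jacobiFlux_eq p ha hd
    refine ⟨4 ^ p * c, 4 ^ p * d, fun τ hτ => ?_⟩
    rw [hc τ hτ]
    field_simp
  · rintro ⟨c, d, hcd⟩
    refine ⟨d / 4 ^ p, jacobiFlux_eq_of_eq p (c / 4 ^ p) (d / 4 ^ p) fun τ hτ => ?_⟩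
    rw [hcd τ hτ]
    field_simp
end

section
/- Let ε₀ > 0, C > 0, Ω ≥ 0 and C₁ < 0 be real numbers. Suppose f : [0, ε₀] → ℝ is nonnegative, bounded, continuous on [0, ε₀], differentiable on (0, ε₀], and satisfies the differential inequality t·f'(t) ≤ C·(Ω + C₁·f(t)) for all t ∈ (0, ε₀]. Then f(ε₀) ≤ Ω / (−C₁). -/
open Set

/-
Put `u = Ω + C₁ f` and `p = -C C₁ > 0`. Since `C₁ < 0`, the inequality reads
`t u'(t) + p u(t) ≥ 0`, i.e. `(u(t) tᵖ)' ≥ 0` on `(0, ε₀)`. As `p > 0`, `t ↦ u(t) tᵖ` is continuous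
on `[0, ε₀]` and vanishes at `0`, so it is nonnegative at `ε₀`, i.e. `u(ε₀) ≥ 0`.
-/

theorem hasDerivAt_mul_rpow {u : ℝ → ℝ} {u' t : ℝ} (p : ℝ) (hu : HasDerivAt u u' t)
    (ht : 0 < t) :
    HasDerivAt (fun s => u s * s ^ p) ((t * u' + p * u t) * t ^ (p - 1)) t := by
  have hmul := hu.mul (Real.hasDerivAt_rpow_const (p := p) (Or.inl ht.ne'))
  have htp : t ^ p = t * t ^ (p - 1) := by
    conv_lhs => rw [show p = 1 + (p - 1) by ring, Real.rpow_add ht, Real.rpow_one]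
  exact hmul.congr_deriv (by rw [htp]; ring)

theorem monotoneOn_mul_rpow {u u' : ℝ → ℝ} {p b : ℝ} (hp : 0 ≤ p)
    (hcont : ContinuousOn u (Icc 0 b))
    (hderiv : ∀ t ∈ Ioo 0 b, HasDerivAt u (u' t) t)
    (hineq : ∀ t ∈ Ioo 0 b, 0 ≤ t * u' t + p * u t) :
    MonotoneOn (fun t => u t * t ^ p) (Icc 0 b) := by
  have hderiv' : ∀ t ∈ Ioo 0 b,
      HasDerivAt (fun s => u s * s ^ p) ((t * u' t + p * u t) * t ^ (p - 1)) t :=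
    fun t ht => hasDerivAt_mul_rpow p (hderiv t ht) ht.1
  refine monotoneOn_of_deriv_nonneg (convex_Icc 0 b)
    (hcont.mul (continuousOn_id.rpow_const fun _ _ => Or.inr hp)) ?_ ?_
  · rw [interior_Icc]
    exact fun t ht => (hderiv' t ht).differentiableAt.differentiableWithinAt
  · rw [interior_Icc]
    intro t ht
    rw [(hderiv' t ht).deriv]
    exact mul_nonneg (hineq t ht) (Real.rpow_nonneg ht.1.le _)

theorem nonneg_of_deriv_mul_rpow_nonneg {u u' : ℝ → ℝ} {p b : ℝ} (hp : 0 < p) (hb : 0 < b)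
    (hcont : ContinuousOn u (Icc 0 b))
    (hderiv : ∀ t ∈ Ioo 0 b, HasDerivAt u (u' t) t)
    (hineq : ∀ t ∈ Ioo 0 b, 0 ≤ t * u' t + p * u t) :
    0 ≤ u b := by
  have hmono := monotoneOn_mul_rpow hp.le hcont hderiv hineq
    (left_mem_Icc.2 hb.le) (right_mem_Icc.2 hb.le) hb.le
  simp only [Real.zero_rpow hp.ne', mul_zero] at hmono
  exact nonneg_of_mul_nonneg_left hmono (Real.rpow_pos_of_pos hb p)

theorem stmt14_general (ε₀ C Ω C₁ : ℝ) (hε : 0 < ε₀) (hC : 0 < C) (hC₁ : C₁ < 0)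
    (f : ℝ → ℝ)
    (hcont : ContinuousOn f (Set.Icc (0 : ℝ) ε₀))
    (hdiff : ∀ t ∈ Set.Ioc (0 : ℝ) ε₀, DifferentiableAt ℝ f t)
    (hineq : ∀ t ∈ Set.Ioc (0 : ℝ) ε₀, t * deriv f t ≤ C * (Ω + C₁ * f t)) :
    f ε₀ ≤ Ω / (-C₁) := by
  have hu : 0 ≤ Ω + C₁ * f ε₀ := by
    refine nonneg_of_deriv_mul_rpow_nonneg (u := fun t => Ω + C₁ * f t)
      (u' := fun t => C₁ * deriv f t) (p := -(C * C₁)) (by nlinarith) hε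
      (continuousOn_const.add (hcont.const_smul C₁)) ?_ ?_
    · intro t ht
      exact ((hdiff t (Ioo_subset_Ioc_self ht)).hasDerivAt.const_mul C₁).const_add Ω
    · intro t ht
      have key : t * (C₁ * deriv f t) + -(C * C₁) * (Ω + C₁ * f t)
          = C₁ * (t * deriv f t - C * (Ω + C₁ * f t)) := by ring
      rw [key]
      exact mul_nonneg_of_nonpos_of_nonpos hC₁.le
        (sub_nonpos.2 (hineq t (Ioo_subset_Ioc_self ht)))
  rw [le_div_iff₀ (neg_pos.2 hC₁)]
  linarith

/-- Degenerate Grönwall-type lemma: if `f ≥ 0` is bounded, continuous on `[0, ε₀]`,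
differentiable on `(0, ε₀]`, and satisfies `t f'(t) ≤ C (Ω + C₁ f(t))` there, with
`C > 0`, `Ω ≥ 0` and `C₁ < 0`, then `f(ε₀) ≤ Ω / (−C₁)`. -/
theorem stmt14 (ε₀ C Ω C₁ : ℝ) (hε : 0 < ε₀) (hC : 0 < C) (hΩ : 0 ≤ Ω) (hC₁ : C₁ < 0)
    (f : ℝ → ℝ)
    (hnonneg : ∀ t ∈ Set.Icc (0 : ℝ) ε₀, 0 ≤ f t)
    (hbdd : ∃ M : ℝ, ∀ t ∈ Set.Icc (0 : ℝ) ε₀, f t ≤ M)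
    (hcont : ContinuousOn f (Set.Icc (0 : ℝ) ε₀))
    (hdiff : ∀ t ∈ Set.Ioc (0 : ℝ) ε₀, DifferentiableAt ℝ f t)
    (hineq : ∀ t ∈ Set.Ioc (0 : ℝ) ε₀, t * deriv f t ≤ C * (Ω + C₁ * f t)) :
    f ε₀ ≤ Ω / (-C₁) :=
  stmt14_general ε₀ C Ω C₁ hε hC hC₁ f hcont hdiff hineq
end
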